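/- Let μ ∈ ℚ^n with μ_1 ≥ μ_2 ≥ ⋯ ≥ μ_n. Then ν = μ if and only if: val(a_i) ≤ μ_1 + ⋯ + μ_i for every i ∈ {1,…,n−1} with μ_i = μ_{i+1}; val(a_i) = μ_1 + ⋯ + μ_i for every i ∈ {1,…,n−1} with μ_i > μ_{i+1}; and val(a_n) = μ_1 + ⋯ + μ_n. -/

import Mathlib

/-!
Expanding `∏ (X - t_j)`, the coefficient `a_k` is `±` the sum over `k`-subsets `A` of the roots of
`∏_{j ∈ A} t_j`, whose valuation `∑_{j ∈ A} ν_j` is at most `S_k(ν)`; when `ν_k > ν_{k+1}` (and for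
`k = n`) the subset of the `k` largest roots is the unique one attaining it. So `val a_k ≤ S_k(ν)`,
with equality at the breaks of `ν`: the forward implication. Conversely, the conditions on `μ`
bound `S(μ)` by `S(ν)` at the breaks of `μ` and `S(ν)` by `S(μ)` at the breaks of `ν`. Each
polygon is linear between its own breaks and the other one is concave, so a discrete minimum
principle gives `S(μ) = S(ν)`, hence `μ = ν`.
-/

open Polynomial

/-- `S_k(ν) = ν₁ + ⋯ + ν_k`, the sum of the first `k` coordinates. -/
def psumQ {n : ℕ} (x : Fin n → ℚ) (k : ℕ) : ℚ :=
  ∑ j ∈ Finset.univ.filter (fun j : Fin n => (j : ℕ) < k), x j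

section Development

open Finset WithZero

section WithBotValuation

variable {K Γ : Type*} [Ring K] [Nontrivial K] [AddCommGroup Γ] [LinearOrder Γ]
  [IsOrderedAddMonoid Γ]

/-- The hypotheses on `v` make it a valuation in Mathlib's multiplicative convention, through
the identification `Γᵐ⁰ = Multiplicative (WithBot Γ)`. -/
def withBotValuation (v : K → WithBot Γ) (hv0 : ∀ x, v x = ⊥ ↔ x = 0)
    (hvmul : ∀ x y : K, x ≠ 0 → y ≠ 0 → v (x * y) = v x + v y)
    (hvadd : ∀ x y : K, v (x + y) ≤ max (v x) (v y)) : Valuation K Γᵐ⁰ where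
  toFun x := toMulBot.symm (.ofAdd (v x))
  map_zero' := by rw [(hv0 0).2 rfl, toMulBot_symm_bot]
  map_one' := by
    obtain ⟨q, hq⟩ := WithBot.ne_bot_iff_exists.1 (mt (hv0 1).1 one_ne_zero)
    have h := hvmul 1 1 one_ne_zero one_ne_zero
    rw [mul_one, ← hq, ← WithBot.coe_add, WithBot.coe_inj, left_eq_add] at h
    rw [← hq, h]
    rfl
  map_mul' x y := by
    rcases eq_or_ne x 0 with rfl | hx
    · rw [zero_mul, (hv0 0).2 rfl, toMulBot_symm_bot, zero_mul]
    rcases eq_or_ne y 0 with rfl | hy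
    · rw [mul_zero, (hv0 0).2 rfl, toMulBot_symm_bot, mul_zero]
    rw [hvmul x y hx hy]
    rfl
  map_add_le_max' := hvadd

variable {v : K → WithBot Γ} {hv0 : ∀ x, v x = ⊥ ↔ x = 0}
  {hvmul : ∀ x y : K, x ≠ 0 → y ≠ 0 → v (x * y) = v x + v y}
  {hvadd : ∀ x y : K, v (x + y) ≤ max (v x) (v y)}

lemma withBotValuation_le_exp_iff {x : K} {q : Γ} :
    withBotValuation v hv0 hvmul hvadd x ≤ exp q ↔ v x ≤ q := Iff.rfl

lemma withBotValuation_eq_exp_iff {x : K} {q : Γ} :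
    withBotValuation v hv0 hvmul hvadd x = exp q ↔ v x = q := Iff.rfl

end WithBotValuation

lemma WithZero.exp_sum {ι M : Type*} [AddCommMonoid M] (s : Finset ι) (f : ι → M) :
    exp (∑ i ∈ s, f i) = ∏ i ∈ s, exp (f i) := by
  classical
  induction s using Finset.induction_on with
  | empty => simp
  | insert a s ha ih => rw [sum_insert ha, prod_insert ha, exp_add, ih]

section Exchange

variable {ι α : Type*} [DecidableEq ι] [AddCommGroup α] [LinearOrder α] [IsOrderedAddMonoid α]
  {s t : Finset ι} {f : ι → α}

lemma Finset.sdiff_nonempty_of_card_eq (hst : #s = #t) (hne : s ≠ t) : (s \ t).Nonempty :=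
  sdiff_nonempty.2 fun hsub => hne (eq_of_subset_of_card_le hsub hst.ge)

lemma Finset.exists_sum_sdiff_le_card_nsmul (hst : #s = #t) (hne : s ≠ t) :
    ∃ a ∈ s \ t, ∑ i ∈ s \ t, f i ≤ #(t \ s) • f a := by
  obtain ⟨a, ha, hmax⟩ := (s \ t).exists_max_image f (sdiff_nonempty_of_card_eq hst hne)
  exact ⟨a, ha, card_sdiff_comm hst ▸ sum_le_card_nsmul _ _ _ hmax⟩

lemma Finset.sum_le_sum_of_card_eq (hst : #s = #t)
    (h : ∀ a ∈ s \ t, ∀ b ∈ t \ s, f a ≤ f b) : ∑ i ∈ s, f i ≤ ∑ i ∈ t, f i := by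
  rcases eq_or_ne s t with rfl | hne
  · rfl
  obtain ⟨a, ha, hle⟩ := exists_sum_sdiff_le_card_nsmul (f := f) hst hne
  rw [← sub_nonneg, ← sum_sdiff_sub_sum_sdiff, sub_nonneg]
  exact hle.trans (card_nsmul_le_sum _ _ _ (h a ha))

lemma Finset.sum_lt_sum_of_card_eq (hst : #s = #t) (hne : s ≠ t)
    (h : ∀ a ∈ s \ t, ∀ b ∈ t \ s, f a < f b) : ∑ i ∈ s, f i < ∑ i ∈ t, f i := by
  obtain ⟨a, ha, hle⟩ := exists_sum_sdiff_le_card_nsmul (f := f) hst hne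
  rw [← sub_pos, ← sum_sdiff_sub_sum_sdiff, sub_pos]
  rw [← sum_const] at hle
  exact hle.trans_lt <|
    sum_lt_sum_of_nonempty (sdiff_nonempty_of_card_eq hst.symm hne.symm) (h a ha)

end Exchange

section PrefixSums

variable {n : ℕ}

lemma card_filter_val_lt_of_le {k : ℕ} (hk : k ≤ n) :
    #(univ.filter fun j : Fin n => (j : ℕ) < k) = k := by
  rw [Fin.card_filter_val_lt, min_eq_right hk]

lemma psumQ_zero (x : Fin n → ℚ) : psumQ x 0 = 0 := by
  simp [psumQ]

lemma psumQ_succ (x : Fin n → ℚ) {k : ℕ} (hk : k < n) :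
    psumQ x (k + 1) = psumQ x k + x ⟨k, hk⟩ := by
  have h : univ.filter (fun j : Fin n => (j : ℕ) < k + 1) =
      insert ⟨k, hk⟩ (univ.filter fun j : Fin n => (j : ℕ) < k) := by
    ext j
    simp only [mem_filter, mem_univ, true_and, mem_insert, Fin.ext_iff]
    omega
  rw [psumQ, h, sum_insert (by simp), psumQ, add_comm]

lemma eq_of_psumQ_eq {x y : Fin n → ℚ} (h : ∀ k ≤ n, psumQ x k = psumQ y k) : x = y := by
  funext j
  have hsucc := h (j + 1) j.2
  rwa [psumQ_succ x j.2, psumQ_succ y j.2, h j j.2.le, add_right_inj] at hsucc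

lemma sum_le_psumQ {x : Fin n → ℚ} (hx : Antitone x) {B : Finset (Fin n)} {k : ℕ}
    (hB : #B = k) : ∑ j ∈ B, x j ≤ psumQ x k := by
  have hk : k ≤ n := hB ▸ card_le_univ B |>.trans_eq (Fintype.card_fin n)
  refine sum_le_sum_of_card_eq (hB.trans (card_filter_val_lt_of_le hk).symm) fun a ha b hb => ?_
  simp only [mem_sdiff, mem_filter, mem_univ, true_and] at ha hb
  exact hx (Fin.le_def.2 (by omega))

lemma sum_lt_psumQ {x : Fin n → ℚ} {k : ℕ}
    (hsep : ∀ a b : Fin n, (b : ℕ) < k → k ≤ (a : ℕ) → x a < x b)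
    {B : Finset (Fin n)} (hB : #B = k) (hne : B ≠ univ.filter fun j : Fin n => (j : ℕ) < k) :
    ∑ j ∈ B, x j < psumQ x k := by
  have hk : k ≤ n := hB ▸ card_le_univ B |>.trans_eq (Fintype.card_fin n)
  refine sum_lt_sum_of_card_eq (hB.trans (card_filter_val_lt_of_le hk).symm) hne
    fun a ha b hb => ?_
  simp only [mem_sdiff, mem_filter, mem_univ, true_and] at ha hb
  exact hsep a b hb.1 (by omega)

lemma Antitone.apply_lt_apply_of_drop {x : Fin n → ℚ} (hx : Antitone x) {k : ℕ} (hk : k < n)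
    (hdrop : x ⟨k, hk⟩ < x ⟨k - 1, (k.sub_le 1).trans_lt hk⟩) (a b : Fin n) (hb : (b : ℕ) < k)
    (ha : k ≤ (a : ℕ)) : x a < x b :=
  calc x a ≤ x ⟨k, hk⟩ := hx (Fin.le_def.2 ha)
    _ < x ⟨k - 1, (k.sub_le 1).trans_lt hk⟩ := hdrop
    _ ≤ x b := hx (Fin.le_def.2 (by simp only; omega))

end PrefixSums

lemma nonneg_of_concave_of_neg {α : Type*} [Field α] [LinearOrder α] [IsStrictOrderedRing α]
    {φ : ℕ → α} {n : ℕ} (h0 : 0 ≤ φ 0) (hn : 0 ≤ φ n)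
    (hφ : ∀ k, 1 ≤ k → k < n → φ k < 0 → φ (k - 1) + φ (k + 1) ≤ 2 * φ k) :
    ∀ k ≤ n, 0 ≤ φ k := by
  by_contra! ⟨k, hk, hneg⟩
  have hmin : ∃ m, m ≤ n ∧ ∀ j ≤ n, φ m ≤ φ j := by
    obtain ⟨m, hm, hmin⟩ := (range (n + 1)).exists_min_image φ ⟨0, by simp⟩
    exact ⟨m, by simpa [Nat.lt_succ_iff] using hm,
      fun j hj => hmin j (mem_range.2 (Nat.lt_succ_of_le hj))⟩
  -- the least minimiser is interior, and concavity there makes its predecessor a minimiser too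
  obtain ⟨hm, hmle⟩ := Nat.find_spec hmin
  have hmneg : φ (Nat.find hmin) < 0 := (hmle k hk).trans_lt hneg
  have hm1 : 1 ≤ Nat.find hmin := Nat.one_le_iff_ne_zero.2 fun h => by
    rw [h] at hmneg; exact hmneg.not_ge h0
  have hmn : Nat.find hmin < n := hm.lt_of_ne fun h => by
    rw [h] at hmneg; exact hmneg.not_ge hn
  have hconc := hφ _ hm1 hmn hmneg
  have hsucc := hmle _ hmn
  refine Nat.find_min hmin (m := Nat.find hmin - 1) (by omega) ⟨by omega, fun j hj => ?_⟩
  linarith [hmle j hj]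

/-- Between two consecutive drops of `y` the polygon `psumQ y` is a line, while `psumQ x` is
concave, so the minimum principle applies to their difference. -/
lemma psumQ_le_psumQ_of_drops {n : ℕ} {x y : Fin n → ℚ} (hx : Antitone x) (hy : Antitone y)
    (hn : psumQ y n ≤ psumQ x n)
    (hdrop : ∀ k, 1 ≤ k → ∀ hk : k < n, y ⟨k, hk⟩ < y ⟨k - 1, (k.sub_le 1).trans_lt hk⟩ →
      psumQ y k ≤ psumQ x k) :
    ∀ k ≤ n, psumQ y k ≤ psumQ x k := by
  intro k hk
  rw [← sub_nonneg]
  refine nonneg_of_concave_of_neg (φ := fun k => psumQ x k - psumQ y k) (by simp [psumQ_zero])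
    (sub_nonneg.2 hn) (fun k h1 h2 hneg => ?_) k hk
  obtain ⟨p, rfl⟩ : ∃ p, k = p + 1 := ⟨k - 1, by omega⟩
  have hyeq : y ⟨p + 1, h2⟩ = y ⟨p, by omega⟩ := by
    refine (hy (Fin.le_def.2 (Nat.le_succ p))).eq_of_not_lt fun hlt => ?_
    exact hneg.not_ge (sub_nonneg.2 (hdrop (p + 1) h1 h2 hlt))
  have hxle : x ⟨p + 1, h2⟩ ≤ x ⟨p, by omega⟩ := hx (Fin.le_def.2 (Nat.le_succ p))
  simp only [Nat.add_sub_cancel, psumQ_succ x h2, psumQ_succ y h2, psumQ_succ x (by omega : p < n),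
    psumQ_succ y (by omega : p < n)]
  linarith

section Vieta

variable {K : Type*} {n : ℕ}

lemma coeff_prod_X_sub_C [CommRing K] (s : Fin n → K) {k : ℕ} (hk : k ≤ n) :
    (∏ j, (X - C (s j))).coeff (n - k) = ∑ A ∈ powersetCard k univ, ∏ j ∈ A, -s j := by
  simp_rw [sub_eq_add_neg, ← C_neg]
  rw [prod_X_add_C_coeff _ _ (by simp), card_univ, Fintype.card_fin, Nat.sub_sub_self hk]

variable [Field K] (w : Valuation K ℚᵐ⁰) {s : Fin n → K} {x : Fin n → ℚ}
  (hs : ∀ j, w (s j) = exp (x j))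
include hs

lemma valuation_prod_neg (A : Finset (Fin n)) : w (∏ j ∈ A, -s j) = exp (∑ j ∈ A, x j) := by
  simp only [map_prod, Valuation.map_neg, hs, exp_sum]

lemma valuation_coeff_prod_X_sub_C_le (hx : Antitone x) {k : ℕ} (hk : k ≤ n) :
    w ((∏ j, (X - C (s j))).coeff (n - k)) ≤ exp (psumQ x k) := by
  rw [coeff_prod_X_sub_C s hk]
  refine w.map_sum_le fun A hA => ?_
  rw [valuation_prod_neg w hs, exp_le_exp]
  exact sum_le_psumQ hx (mem_powersetCard.1 hA).2

/-- When the first `k` values of `x` strictly dominate the others, the product of the `k`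
largest roots is the unique term of maximal valuation in `a_k`. -/
lemma valuation_coeff_prod_X_sub_C_eq {k : ℕ} (hk : k ≤ n)
    (hsep : ∀ a b : Fin n, (b : ℕ) < k → k ≤ (a : ℕ) → x a < x b) :
    w ((∏ j, (X - C (s j))).coeff (n - k)) = exp (psumQ x k) := by
  have hT : (univ.filter fun j : Fin n => (j : ℕ) < k) ∈ powersetCard k univ :=
    mem_powersetCard.2 ⟨subset_univ _, card_filter_val_lt_of_le hk⟩
  rw [coeff_prod_X_sub_C s hk, w.map_sum_eq_of_lt hT fun B hB => ?_, valuation_prod_neg w hs,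
    psumQ]
  rw [mem_sdiff, mem_singleton] at hB
  rw [valuation_prod_neg w hs, valuation_prod_neg w hs, exp_lt_exp]
  exact sum_lt_psumQ hsep (mem_powersetCard.1 hB.1).2 hB.2

end Vieta

end Development

/-- Newton stratum description (Theorem 1.4(4) + Theorem 1.3 for `GL_n`): for
nonincreasing `μ ∈ ℚⁿ`, the slope vector `ν` of `f` equals `μ` iff
`val(a_i) ≤ S_i(μ)` whenever `μ_i = μ_{i+1}`, `val(a_i) = S_i(μ)` whenever
`μ_i > μ_{i+1}` (`1 ≤ i ≤ n-1`), and `val(aₙ) = S_n(μ)`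
(here `a_i = f.coeff (n - i)`). -/
theorem stmt_12 {K : Type*} [Field K]
    (v : K → WithBot ℚ)
    (hv0 : ∀ x : K, v x = ⊥ ↔ x = 0)
    (hvmul : ∀ x y : K, x ≠ 0 → y ≠ 0 → v (x * y) = v x + v y)
    (hvadd : ∀ x y : K, v (x + y) ≤ max (v x) (v y))
    (n : ℕ)
    (f : Polynomial K) (t : Fin n → K)
    (hfact : f = ∏ j : Fin n, (X - C (t j)))
    (ν : Fin n → ℚ) (hν : ∀ i j : Fin n, i ≤ j → ν j ≤ ν i)
    (σ : Equiv.Perm (Fin n)) (hσ : ∀ j, v (t j) = ((ν (σ j) : ℚ) : WithBot ℚ))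
    (μ : Fin n → ℚ) (hμ : ∀ i j : Fin n, i ≤ j → μ j ≤ μ i) :
    ν = μ ↔
      ((∀ i : ℕ, ∀ h1 : 1 ≤ i, ∀ h2 : i < n,
          μ ⟨i - 1, by omega⟩ = μ ⟨i, h2⟩ →
          v (f.coeff (n - i)) ≤ ((psumQ μ i : ℚ) : WithBot ℚ)) ∧
       (∀ i : ℕ, ∀ h1 : 1 ≤ i, ∀ h2 : i < n,
          μ ⟨i, h2⟩ < μ ⟨i - 1, by omega⟩ →
          v (f.coeff (n - i)) = ((psumQ μ i : ℚ) : WithBot ℚ)) ∧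
       v (f.coeff 0) = ((psumQ μ n : ℚ) : WithBot ℚ)) := by
  set w := withBotValuation v hv0 hvmul hvadd
  have hs : ∀ j, w (t (σ.symm j)) = WithZero.exp (ν j) := fun j => by
    simpa using withBotValuation_eq_exp_iff.2 (hσ (σ.symm j))
  have hf : f = ∏ j, (X - C (t (σ.symm j))) := hfact.trans (σ.symm.prod_comp _).symm
  have upper (k : ℕ) (hk : k ≤ n) : v (f.coeff (n - k)) ≤ psumQ ν k :=
    withBotValuation_le_exp_iff.1 (hf ▸ valuation_coeff_prod_X_sub_C_le w hs hν hk)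
  have atBreak (k : ℕ) (h1 : 1 ≤ k) (hk : k < n) (hlt : ν ⟨k, hk⟩ < ν ⟨k - 1, by omega⟩) :
      v (f.coeff (n - k)) = psumQ ν k :=
    withBotValuation_eq_exp_iff.1 (hf ▸ valuation_coeff_prod_X_sub_C_eq w hs hk.le
      (Antitone.apply_lt_apply_of_drop hν hk hlt))
  have atEnd : v (f.coeff 0) = psumQ ν n := by
    have h := hf ▸ valuation_coeff_prod_X_sub_C_eq w hs le_rfl fun a _ _ ha => absurd a.2 ha.not_gt
    rwa [Nat.sub_self] at h
  constructor
  · rintro rfl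
    exact ⟨fun k _ hk _ => upper k hk.le, atBreak, atEnd⟩
  · rintro ⟨hEq, hLt, hEnd⟩
    have upperμ (k : ℕ) (h1 : 1 ≤ k) (hk : k < n) : v (f.coeff (n - k)) ≤ psumQ μ k := by
      rcases (hμ ⟨k - 1, by omega⟩ ⟨k, hk⟩ (Fin.le_def.2 (by simp only; omega))).lt_or_eq
        with hlt | heq
      exacts [(hLt k h1 hk hlt).le, hEq k h1 hk heq.symm]
    have hsum : psumQ ν n = psumQ μ n := WithBot.coe_injective (atEnd.symm.trans hEnd)
    refine eq_of_psumQ_eq fun k hk => le_antisymm ?_ ?_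
    · exact psumQ_le_psumQ_of_drops hμ hν hsum.le (fun k h1 hk hlt =>
        WithBot.coe_le_coe.1 ((atBreak k h1 hk hlt).ge.trans (upperμ k h1 hk))) k hk
    · exact psumQ_le_psumQ_of_drops hν hμ hsum.ge (fun k h1 hk hlt =>
        WithBot.coe_le_coe.1 ((hLt k h1 hk hlt).ge.trans (upper k hk.le))) k hk
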